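/- Let k ≥ 2, n : Fin k → ℝ with n_i > 0, fix y j : Fin k with j ≠ y, and let η : ℕ → (Fin k → ℝ) with φ̂_y(η_m) → 1. Assume additionally that φ_j(η_m)/φ_j(η_m) ratios are well-defined (all quantities positive, automatic). Then limsup and liminf of φ̂_j(η_m)/φ_j(η_m) both equal n_j/n_y, i.e., φ̂_j(η_m)/φ_j(η_m) → n_j/n_y as m → ∞. -/

import Mathlib

/-!
The ratio `φ̂ⱼ / φⱼ` equals `n j * ∑ i, φ̂ᵢ / n i`, a continuous function of the vector `φ̂`.
A probability vector whose `y`-th entry tends to `1` tends to the vertex `Pi.single y 1` of the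
simplex, where this function takes the value `n j / n y`.
-/

open Real Finset Filter Topology

theorem tendsto_pi_single_of_sum_eq_one {α ι : Type*} [Fintype ι] [DecidableEq ι]
    {l : Filter α} {p : α → ι → ℝ} (hp : ∀ a i, 0 ≤ p a i) (hsum : ∀ a, ∑ i, p a i = 1)
    {y : ι} (hy : Tendsto (fun a => p a y) l (𝓝 1)) :
    Tendsto p l (𝓝 (Pi.single y 1)) := by
  refine tendsto_pi_nhds.2 fun i => ?_
  rcases eq_or_ne i y with rfl | hiy
  · simpa using hy
  have hle : ∀ a, p a i ≤ 1 - p a y := fun a => by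
    have := sum_le_sum_of_subset_of_nonneg (subset_univ {i, y}) fun i _ _ => hp a i
    rw [sum_pair hiy, hsum] at this
    linarith
  have hgap : Tendsto (fun a => 1 - p a y) l (𝓝 0) := by
    simpa using hy.const_sub 1
  simpa [hiy] using squeeze_zero (hp · i) hle hgap

section BalancedSoftmax

variable {ι : Type*} [Fintype ι] (n : ι → ℝ) (x : ι → ℝ)

/-- The balanced softmax `φ̂` with class counts `n`; the standard softmax `φ` is
`balancedSoftmax 1`. -/
noncomputable def balancedSoftmax (i : ι) : ℝ :=
  n i * exp (x i) / ∑ l, n l * exp (x l)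

variable {n}

theorem balancedSoftmax_nonneg (hn : ∀ i, 0 ≤ n i) (i : ι) : 0 ≤ balancedSoftmax n x i :=
  div_nonneg (mul_nonneg (hn i) (exp_pos _).le)
    (sum_nonneg fun l _ => mul_nonneg (hn l) (exp_pos _).le)

theorem sum_balancedSoftmax [Nonempty ι] (hn : ∀ i, 0 < n i) :
    ∑ i, balancedSoftmax n x i = 1 := by
  have hS : 0 < ∑ l, n l * exp (x l) :=
    sum_pos (fun l _ => mul_pos (hn l) (exp_pos _)) univ_nonempty
  simp only [balancedSoftmax, ← sum_div, div_self hS.ne']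

theorem balancedSoftmax_div_softmax (hn : ∀ i, 0 < n i) (j : ι) :
    balancedSoftmax n x j / balancedSoftmax 1 x j = n j * ∑ i, balancedSoftmax n x i / n i := by
  have hS : 0 < ∑ l, n l * exp (x l) :=
    sum_pos (fun l _ => mul_pos (hn l) (exp_pos _)) ⟨j, mem_univ j⟩
  have hcancel : ∀ i, balancedSoftmax n x i / n i = exp (x i) / ∑ l, n l * exp (x l) := fun i => by
    rw [balancedSoftmax, mul_comm, mul_div_right_comm, mul_div_cancel_right₀ _ (hn i).ne']
  rw [sum_congr rfl fun i _ => hcancel i, ← sum_div]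
  simp only [balancedSoftmax, Pi.one_apply, one_mul]
  field_simp

end BalancedSoftmax

theorem negative_sample_ratio_limit_general (k : ℕ)
    (n : Fin k → ℝ) (hn : ∀ i, 0 < n i) (y j : Fin k)
    (η : ℕ → (Fin k → ℝ))
    (hconv : Tendsto (fun m => n y * Real.exp (η m y) / ∑ i, n i * Real.exp (η m i))
      atTop (nhds 1)) :
    Tendsto (fun m =>
        (n j * Real.exp (η m j) / ∑ i, n i * Real.exp (η m i)) /
        (Real.exp (η m j) / ∑ i, Real.exp (η m i)))
      atTop (nhds (n j / n y)) := by
  have : Nonempty (Fin k) := ⟨y⟩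
  have hvertex : Tendsto (fun m => balancedSoftmax n (η m)) atTop (𝓝 (Pi.single y 1)) :=
    tendsto_pi_single_of_sum_eq_one (fun m => balancedSoftmax_nonneg _ (hn · |>.le))
      (fun m => sum_balancedSoftmax _ hn) hconv
  have hcont : Continuous fun v : Fin k → ℝ => n j * ∑ i, v i / n i := by fun_prop
  have hlim := (hcont.tendsto _).comp hvertex
  simp only [Function.comp_def, ← balancedSoftmax_div_softmax _ hn] at hlim
  convert hlim using 2
  · simp [balancedSoftmax]
  · simp [Pi.single_apply, div_eq_mul_inv]

theorem negative_sample_ratio_limit (k : ℕ) (hk : 2 ≤ k)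
    (n : Fin k → ℝ) (hn : ∀ i, 0 < n i) (y j : Fin k) (hjy : j ≠ y)
    (η : ℕ → (Fin k → ℝ))
    (hconv : Tendsto (fun m => n y * Real.exp (η m y) / ∑ i, n i * Real.exp (η m i))
      atTop (nhds 1)) :
    Tendsto (fun m =>
        (n j * Real.exp (η m j) / ∑ i, n i * Real.exp (η m i)) /
        (Real.exp (η m j) / ∑ i, Real.exp (η m i)))
      atTop (nhds (n j / n y)) :=
  negative_sample_ratio_limit_general k n hn y j η hconv
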